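/- For every n ∈ ℕ, there exists a convex geometric graph with n vertices and O(n^(3/2)) edges that is universal for the family of n-vertex outerplanar graphs consisting of a spanning cycle plus 2 disjoint chords. Specifically, placing n vertices as a regular convex n-gon and adding, for each s in the set S = {0,…,⌊√n⌋−1} ∪ {i·⌊√n⌋ : 1 ≤ i ≤ ⌊√n⌋}, a star centered at vertex v_s connecting it to all other vertices, yields such a graph. -/

import Mathlib

/-!
Every graph in `O_2(n)` is, after relabelling, the polygon cycle plus two non-crossing chords.
Rotating the polygon keeps cycle edges on the cycle and preserves crossings, so it suffices to
rotate one endpoint of each chord into `S`: both chords then become edges of stars. Two endpoints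
at cyclic distance `d ≤ n/2` can be rotated into `S` simultaneously because, with `s = ⌊√n⌋` and
`q = ⌈d/s⌉ ≤ s`, both `q s - d < s` and `q s` lie in `S`. There are at most `n` cycle edges and
at most `|S| n ≤ 2 s n` star edges, hence at most `3 n^{3/2}` edges.
-/

def cycAdj {n : ℕ} (i j : Fin n) : Prop :=
  i ≠ j ∧ (((i : ℕ) + 1) % n = (j : ℕ) ∨ ((j : ℕ) + 1) % n = (i : ℕ))

def chordsCross {n : ℕ} (a b c d : Fin n) : Prop :=
  (min a b < min c d ∧ min c d < max a b ∧ max a b < max c d) ∨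
  (min c d < min a b ∧ min a b < max c d ∧ max c d < max a b)

def IsPlaneEmb {n : ℕ} (H G : SimpleGraph (Fin n)) (f : Fin n → Fin n) : Prop :=
  Function.Injective f ∧ (∀ u v, H.Adj u v → G.Adj (f u) (f v)) ∧
  ∀ u v x y, H.Adj u v → H.Adj x y →
    u ≠ x → u ≠ y → v ≠ x → v ≠ y → ¬ chordsCross (f u) (f v) (f x) (f y)

def UniversalFor {n : ℕ} (G : SimpleGraph (Fin n)) (F : Set (SimpleGraph (Fin n))) : Prop :=
  ∀ H ∈ F, ∃ f, IsPlaneEmb H G f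

def Ofam (h n : ℕ) : Set (SimpleGraph (Fin n)) :=
  {H | ∃ (g : Fin n ≃ Fin n) (D : Finset (Fin n × Fin n)),
    D.card = h ∧
    (∀ p ∈ D, p.1 ≠ p.2 ∧ ¬ cycAdj p.1 p.2) ∧
    (∀ p ∈ D, ∀ q ∈ D, p ≠ q →
      p.1 ≠ q.1 ∧ p.1 ≠ q.2 ∧ p.2 ≠ q.1 ∧ p.2 ≠ q.2 ∧
      ¬ chordsCross p.1 p.2 q.1 q.2) ∧
    ∀ u v, H.Adj u v ↔ (cycAdj (g u) (g v) ∨ (g u, g v) ∈ D ∨ (g v, g u) ∈ D)}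

/-- `S = {0,…,⌊√n⌋−1} ∪ {i·⌊√n⌋ : 1 ≤ i ≤ ⌊√n⌋}`. -/
def sqrtSet (n : ℕ) : Finset ℕ :=
  Finset.range (Nat.sqrt n) ∪ (Finset.Icc 1 (Nat.sqrt n)).image (fun i => i * Nat.sqrt n)

/-- The convex geometric graph on a regular `n`-gon consisting of the outer cycle plus
a star centered at `v_s` for every `s ∈ S`. -/
def starGraph (n : ℕ) : SimpleGraph (Fin n) :=
  SimpleGraph.fromRel (fun i j => cycAdj i j ∨ (i : ℕ) ∈ sqrtSet n ∨ (j : ℕ) ∈ sqrtSet n)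

section Polygon

variable {n : ℕ}

lemma cycAdj_iff [NeZero n] {i j : Fin n} : cycAdj i j ↔ i ≠ j ∧ (j = i + 1 ∨ i = j + 1) := by
  simp only [cycAdj, Fin.ext_iff, Fin.val_add, Fin.val_one', Nat.add_mod_mod]
  grind

lemma cycAdj_add_right_iff [NeZero n] {i j : Fin n} (t : Fin n) :
    cycAdj (i + t) (j + t) ↔ cycAdj i j := by
  simp only [cycAdj_iff, add_right_comm _ t 1, add_left_inj, ne_eq]

lemma chordsCross_comm {a b c d : Fin n} : chordsCross a b c d ↔ chordsCross c d a b := Or.comm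

lemma chordsCross_swap_left {a b c d : Fin n} : chordsCross a b c d ↔ chordsCross b a c d := by
  simp only [chordsCross, min_comm a b, max_comm a b]

lemma chordsCross_swap_right {a b c d : Fin n} : chordsCross a b c d ↔ chordsCross a b d c := by
  simp only [chordsCross, min_comm c d, max_comm c d]

lemma not_chordsCross_self (a b : Fin n) : ¬ chordsCross a b a b := by
  simp [chordsCross]

lemma chordsCross_add_one_iff [NeZero n] {a b c d : Fin n} :
    chordsCross (a + 1) (b + 1) (c + 1) (d + 1) ↔ chordsCross a b c d := by
  rcases (NeZero.one_le : 1 ≤ n).lt_or_eq with h | rfl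
  · simp only [chordsCross, Fin.lt_def, Fin.coe_min, Fin.coe_max, Fin.val_add_eq_ite,
      Fin.val_one', Nat.mod_eq_of_lt h]
    have := a.isLt; have := b.isLt; have := c.isLt; have := d.isLt
    split_ifs <;> omega
  · simp only [Subsingleton.elim _ a]

lemma chordsCross_add_right_iff [NeZero n] {a b c d : Fin n} (t : Fin n) :
    chordsCross (a + t) (b + t) (c + t) (d + t) ↔ chordsCross a b c d := by
  obtain ⟨m, rfl⟩ := Nat.exists_eq_succ_of_ne_zero (NeZero.ne n)
  induction t using Fin.induction with
  | zero => simp only [add_zero]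
  | succ t ih => simpa only [← Fin.coeSucc_eq_succ, ← add_assoc, chordsCross_add_one_iff] using ih

lemma eq_add_one_or_of_add_one_mod_eq {x y : ℕ} (hx : x < n) (h : (x + 1) % n = y) :
    y = x + 1 ∨ (x + 1 = n ∧ y = 0) := by
  rcases Nat.lt_or_ge (x + 1) n with hlt | hge
  · exact Or.inl (h ▸ Nat.mod_eq_of_lt hlt)
  · have heq : x + 1 = n := by omega
    exact Or.inr ⟨heq, by rw [← h, heq, Nat.mod_self]⟩

-- Nothing lies strictly between consecutive vertices, and the edge `{n - 1, 0}` spans all others.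
lemma not_chordsCross_of_cycAdj {a b : Fin n} (h : cycAdj a b) (c d : Fin n) :
    ¬ chordsCross a b c d := by
  simp only [chordsCross, Fin.lt_def, Fin.coe_min, Fin.coe_max]
  have := c.isLt; have := d.isLt
  rcases h.2 with h | h
  · rcases eq_add_one_or_of_add_one_mod_eq a.isLt h with h | h <;> omega
  · rcases eq_add_one_or_of_add_one_mod_eq b.isLt h with h | h <;> omega

lemma not_chordsCross_of_mem {D : Finset (Fin n × Fin n)}
    (hD : ∀ p ∈ D, ∀ q ∈ D, p ≠ q → ¬ chordsCross p.1 p.2 q.1 q.2) {a b c d : Fin n}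
    (hab : (a, b) ∈ D ∨ (b, a) ∈ D) (hcd : (c, d) ∈ D ∨ (d, c) ∈ D) :
    ¬ chordsCross a b c d := by
  intro hcross
  obtain ⟨p, hp, hpcd⟩ : ∃ p ∈ D, chordsCross p.1 p.2 c d := by
    rcases hab with h | h
    · exact ⟨_, h, hcross⟩
    · exact ⟨_, h, chordsCross_swap_left.1 hcross⟩
  obtain ⟨q, hq, hpq⟩ : ∃ q ∈ D, chordsCross p.1 p.2 q.1 q.2 := by
    rcases hcd with h | h
    · exact ⟨_, h, hpcd⟩
    · exact ⟨_, h, chordsCross_swap_right.1 hpcd⟩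
  exact hD p hp q hq (by rintro rfl; exact not_chordsCross_self _ _ hpq) hpq

lemma not_chordsCross_of_cycAdj_or_mem {D : Finset (Fin n × Fin n)}
    (hD : ∀ p ∈ D, ∀ q ∈ D, p ≠ q → ¬ chordsCross p.1 p.2 q.1 q.2) {a b c d : Fin n}
    (hab : cycAdj a b ∨ (a, b) ∈ D ∨ (b, a) ∈ D) (hcd : cycAdj c d ∨ (c, d) ∈ D ∨ (d, c) ∈ D) :
    ¬ chordsCross a b c d := by
  rcases hab with hab | hab
  · exact not_chordsCross_of_cycAdj hab c d
  rcases hcd with hcd | hcd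
  · exact fun h => not_chordsCross_of_cycAdj hcd a b (chordsCross_comm.1 h)
  exact not_chordsCross_of_mem hD hab hcd

lemma exists_eq_add_of_ne [NeZero n] {x y : Fin n} (hxy : x ≠ y) :
    ∃ δ : Fin n, 0 < (δ : ℕ) ∧ 2 * (δ : ℕ) ≤ n ∧ (y = x + δ ∨ x = y + δ) := by
  have hδ : y - x ≠ 0 := sub_ne_zero.2 hxy.symm
  have hpos : 0 < ((y - x : Fin n) : ℕ) := Fin.pos_iff_ne_zero.2 hδ
  have := (y - x).isLt
  by_cases h : 2 * ((y - x : Fin n) : ℕ) ≤ n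
  · exact ⟨y - x, hpos, h, Or.inl (add_sub_cancel x y).symm⟩
  · refine ⟨x - y, ?_, ?_, Or.inr (add_sub_cancel y x).symm⟩ <;>
      rw [← neg_sub, Fin.val_neg, if_neg hδ] <;> omega

end Polygon

lemma card_sqrtSet_le (n : ℕ) : (sqrtSet n).card ≤ 2 * Nat.sqrt n := by
  calc (sqrtSet n).card
      ≤ (Finset.range (Nat.sqrt n)).card
        + ((Finset.Icc 1 (Nat.sqrt n)).image (fun i => i * Nat.sqrt n)).card :=
        Finset.card_union_le _ _
    _ ≤ Nat.sqrt n + (Finset.Icc 1 (Nat.sqrt n)).card := by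
        rw [Finset.card_range]; exact Nat.add_le_add_left Finset.card_image_le _
    _ = 2 * Nat.sqrt n := by rw [Nat.card_Icc]; omega

lemma exists_mem_sqrtSet_add {n d : ℕ} (hd : 0 < d) (hdn : 2 * d ≤ n) :
    ∃ a ∈ sqrtSet n, a + d ∈ sqrtSet n ∧ a + d < n := by
  have hsn := Nat.sqrt_le n
  have hns := Nat.lt_succ_sqrt n
  have hs : 0 < Nat.sqrt n := Nat.sqrt_pos.2 (by omega)
  unfold sqrtSet
  generalize Nat.sqrt n = s at *
  have hds : d ≤ s * s := by nlinarith
  have hdsn : d + s ≤ n := by nlinarith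
  obtain ⟨q, r, hr, hdiv⟩ : ∃ q r, r < s ∧ d - 1 = q * s + r :=
    ⟨_, _, Nat.mod_lt _ hs, (Nat.div_add_mod' _ _).symm⟩
  have hq : q < s := Nat.lt_of_mul_lt_mul_right (by omega : q * s < s * s)
  refine ⟨s - 1 - r, ?_, ?_, by omega⟩
  · simp only [Finset.mem_union, Finset.mem_range]; omega
  · rw [show s - 1 - r + d = (q + 1) * s by rw [add_one_mul]; omega]
    simp only [Finset.mem_union, Finset.mem_image, Finset.mem_Icc]
    exact Or.inr ⟨q + 1, ⟨by omega, hq⟩, rfl⟩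

lemma exists_add_mem_sqrtSet {n : ℕ} [NeZero n] {x y : Fin n} (hxy : x ≠ y) :
    ∃ t : Fin n, ((x + t : Fin n) : ℕ) ∈ sqrtSet n ∧ ((y + t : Fin n) : ℕ) ∈ sqrtSet n := by
  suffices key : ∀ x δ : Fin n, 0 < (δ : ℕ) → 2 * (δ : ℕ) ≤ n →
      ∃ t : Fin n, ((x + t : Fin n) : ℕ) ∈ sqrtSet n ∧ ((x + δ + t : Fin n) : ℕ) ∈ sqrtSet n by
    obtain ⟨δ, hpos, hle, rfl | rfl⟩ := exists_eq_add_of_ne hxy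
    · exact key x δ hpos hle
    · exact (key y δ hpos hle).imp fun _ => And.symm
  intro x δ hpos hle
  obtain ⟨a, ha, had, hlt⟩ := exists_mem_sqrtSet_add hpos hle
  refine ⟨⟨a, by omega⟩ - x, by rwa [add_sub_cancel], ?_⟩
  rwa [add_right_comm, add_sub_cancel, Fin.val_add, Nat.mod_eq_of_lt hlt]

lemma isPlaneEmb_add_right {n : ℕ} [NeZero n] {H : SimpleGraph (Fin n)} {g : Fin n ≃ Fin n}
    {D : Finset (Fin n × Fin n)}
    (hD : ∀ p ∈ D, ∀ q ∈ D, p ≠ q → ¬ chordsCross p.1 p.2 q.1 q.2)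
    (hAdj : ∀ u v, H.Adj u v ↔ (cycAdj (g u) (g v) ∨ (g u, g v) ∈ D ∨ (g v, g u) ∈ D))
    {t : Fin n} (hS : ∀ p ∈ D, ((p.1 + t : Fin n) : ℕ) ∈ sqrtSet n) :
    IsPlaneEmb H (starGraph n) (fun v => g v + t) := by
  refine ⟨(add_left_injective t).comp g.injective, fun u v huv => ?_,
    fun u v x y huv hxy _ _ _ _ => ?_⟩
  · refine ⟨fun h => huv.ne (g.injective (add_right_cancel h)), ?_⟩
    rcases (hAdj u v).1 huv with h | h | h
    · exact Or.inl (Or.inl ((cycAdj_add_right_iff t).2 h))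
    · exact Or.inl (Or.inr (Or.inl (hS _ h)))
    · exact Or.inl (Or.inr (Or.inr (hS _ h)))
  · rw [chordsCross_add_right_iff]
    exact not_chordsCross_of_cycAdj_or_mem hD ((hAdj u v).1 huv) ((hAdj x y).1 hxy)

lemma universalFor_starGraph (n : ℕ) : UniversalFor (starGraph n) (Ofam 2 n) := by
  rintro H ⟨g, D, hcard, -, hD, hAdj⟩
  rcases Nat.eq_zero_or_pos n with rfl | hn
  · exact ⟨id, Function.injective_id, fun u => isEmptyElim u, fun u => isEmptyElim u⟩
  have := NeZero.of_pos hn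
  obtain ⟨p, q, hpq, rfl⟩ := Finset.card_eq_two.1 hcard
  obtain ⟨t, hp, hq⟩ := exists_add_mem_sqrtSet (hD p (by simp) q (by simp) hpq).1
  refine ⟨_, isPlaneEmb_add_right (t := t)
    (fun p hp q hq hpq => (hD p hp q hq hpq).2.2.2.2) hAdj ?_⟩
  simp only [Finset.mem_insert, Finset.mem_singleton, forall_eq_or_imp, forall_eq]
  exact ⟨hp, hq⟩

def starCenters (n : ℕ) : Finset (Fin n) :=
  Finset.univ.filter fun v => (v : ℕ) ∈ sqrtSet n

lemma card_starCenters_le (n : ℕ) : (starCenters n).card ≤ 2 * Nat.sqrt n :=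
  (Finset.card_le_card_of_injOn Fin.val (fun v hv => by simpa [starCenters] using hv)
    Fin.val_injective.injOn).trans (card_sqrtSet_le n)

lemma edgeSet_starGraph_subset {n : ℕ} [NeZero n] :
    (starGraph n).edgeSet ⊆ ↑((Finset.univ.image fun i : Fin n => s(i, i + 1)) ∪
      (starCenters n).biUnion fun v => Finset.univ.image fun w => s(v, w)) := by
  set T := (Finset.univ.image fun i : Fin n => s(i, i + 1)) ∪
    (starCenters n).biUnion fun v => Finset.univ.image fun w => s(v, w)
  have hcycle : ∀ i, s(i, i + 1) ∈ T := fun i =>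
    Finset.mem_union_left _ (Finset.mem_image_of_mem _ (Finset.mem_univ i))
  have hstar : ∀ i j : Fin n, (i : ℕ) ∈ sqrtSet n → s(i, j) ∈ T := fun i j hi =>
    Finset.mem_union_right _ (Finset.mem_biUnion.2
      ⟨i, by simpa [starCenters] using hi, Finset.mem_image_of_mem _ (Finset.mem_univ j)⟩)
  have key : ∀ i j : Fin n, cycAdj i j ∨ (i : ℕ) ∈ sqrtSet n ∨ (j : ℕ) ∈ sqrtSet n →
      s(i, j) ∈ T := by
    rintro i j (h | h | h)
    · rcases (cycAdj_iff.1 h).2 with rfl | rfl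
      · exact hcycle i
      · exact Sym2.eq_swap ▸ hcycle j
    · exact hstar i j h
    · exact Sym2.eq_swap ▸ hstar j i h
  intro e he
  induction e using Sym2.ind with
  | h i j =>
    obtain ⟨-, h | h⟩ := he
    · exact key i j h
    · exact Sym2.eq_swap ▸ key j i h

lemma ncard_edgeSet_starGraph_le (n : ℕ) :
    (starGraph n).edgeSet.ncard ≤ 3 * (Nat.sqrt n * n) := by
  rcases Nat.eq_zero_or_pos n with rfl | hn
  · simp [Set.eq_empty_of_isEmpty]
  have := NeZero.of_pos hn
  calc (starGraph n).edgeSet.ncard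
      ≤ ((Finset.univ.image fun i : Fin n => s(i, i + 1)) ∪
          (starCenters n).biUnion fun v => Finset.univ.image fun w => s(v, w)).card := by
        simpa only [Set.ncard_coe_finset] using Set.ncard_le_ncard edgeSet_starGraph_subset
    _ ≤ n + (starCenters n).card * n := by
        refine (Finset.card_union_le _ _).trans (add_le_add ?_ ?_)
        · exact Finset.card_image_le.trans (by simp)
        · exact Finset.card_biUnion_le_card_mul _ _ _ fun _ _ =>
            Finset.card_image_le.trans (by simp)
    _ ≤ 3 * (Nat.sqrt n * n) := by nlinarith [card_starCenters_le n, Nat.sqrt_pos.2 hn]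

lemma natSqrt_mul_le_rpow (n : ℕ) : ((Nat.sqrt n * n : ℕ) : ℝ) ≤ (n : ℝ) ^ ((3 : ℝ) / 2) := by
  rw [show (3 : ℝ) / 2 = 1 / 2 + 1 by norm_num, Real.rpow_add' (Nat.cast_nonneg n) (by norm_num),
    Real.rpow_one, ← Real.sqrt_eq_rpow]
  push_cast
  gcongr
  exact Real.nat_sqrt_le_real_sqrt

/-- There is a convex geometric graph with `n` vertices and `O(n^{3/2})` edges that is
universal for `O_2(n)`: the regular `n`-gon with stars centered at the vertices
indexed by `S`. -/
theorem stmt_5 :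
    ∃ c : ℝ, 0 < c ∧ ∀ n : ℕ,
      UniversalFor (starGraph n) (Ofam 2 n) ∧
      ((starGraph n).edgeSet.ncard : ℝ) ≤ c * (n : ℝ) ^ ((3 : ℝ) / 2) := by
  refine ⟨3, by norm_num, fun n => ⟨universalFor_starGraph n, ?_⟩⟩
  calc ((starGraph n).edgeSet.ncard : ℝ) ≤ 3 * ((Nat.sqrt n * n : ℕ) : ℝ) := by
        exact_mod_cast ncard_edgeSet_starGraph_le n
    _ ≤ 3 * (n : ℝ) ^ ((3 : ℝ) / 2) := by gcongr; exact natSqrt_mul_le_rpow n
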